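/- Let N ≥ 1, let y : ℕ → {0,1}, p : ℕ → [0,1], p^F : ℕ → [0,1], and ι : ℕ → {0,...,N−1} with p^F_t ∈ [ι(t)/N, (ι(t)+1)/N] for all t. For each T and bucket i let T_i(T) := #{t ≤ T : ι(t) = i} and R_i(T) := (1/T_i(T)) ∑_{t ≤ T, ι(t)=i} ((y_t − p_t)^2 − (y_t − i/N)^2) when T_i(T) > 0 (else 0). If for every bucket i, limsup_{T→∞} R_i(T) ≤ 0 and the values R_i(T) are uniformly bounded above, then limsup_{T→∞} [ (1/T) ∑_{t=1}^T (y_t − p_t)^2 − (1/T) ∑_{t=1}^T (y_t − p^F_t)^2 ] ≤ 2/N. -/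

import Mathlib

/-!
Split the rounds up to `T` by bucket. In bucket `i` the forecasts `p_t` lose `Tᵢ(T) · Rᵢ(T)` more
than the constant forecast `i/N`, so in total they lose at most `T · maxᵢ Rᵢ(T)` more than the
forecasts `ι(t)/N`, and this is eventually below `T · ε`. Since `p^F_t` and `ι(t)/N` lie in the same
bucket of width `1/N`, and `(y - a)² - (y - q)² = (q - a)(2y - a - q)` with `2y - a - q ≤ 2`,
the forecast `ι(t)/N` loses at most `2/N` per round more than `p^F_t`.
-/

open Finset Filter

theorem sq_sub_le_sq_sub_add_two_mul {y a q δ : ℝ} (hy : y ≤ 1) (ha : 0 ≤ a) (haq : a ≤ q)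
    (hqa : q ≤ a + δ) : (y - a) ^ 2 ≤ (y - q) ^ 2 + 2 * δ := by
  nlinarith [mul_le_mul_of_nonneg_left (by linarith : 2 * y - a - q ≤ 2) (sub_nonneg.2 haq)]

theorem sq_sub_le_one {y q : ℝ} (hy : y ∈ Set.Icc (0 : ℝ) 1) (hq : q ∈ Set.Icc (0 : ℝ) 1) :
    (y - q) ^ 2 ≤ 1 := by
  obtain ⟨hy0, hy1⟩ := hy
  obtain ⟨hq0, hq1⟩ := hq
  nlinarith

theorem Icc_div_subset_Icc_zero_one {N : ℕ} (i : Fin N) :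
    Set.Icc ((i : ℝ) / N) (((i : ℝ) + 1) / N) ⊆ Set.Icc 0 1 := by
  have hN : (0 : ℝ) < N := Nat.cast_pos.2 i.pos
  have hi : (i : ℝ) + 1 ≤ N := by exact_mod_cast i.isLt
  exact Set.Icc_subset_Icc (by positivity) ((div_le_one hN).2 hi)

theorem card_mul_average_eq_sum {α : Type*} (s : Finset α) (f : α → ℝ) :
    (#s : ℝ) * (if 0 < #s then 1 / (#s : ℝ) * ∑ t ∈ s, f t else 0) = ∑ t ∈ s, f t := by
  split_ifs with hs
  · have : (#s : ℝ) ≠ 0 := by positivity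
    field_simp
  · rw [card_pos, not_nonempty_iff_eq_empty] at hs
    simp [hs]

theorem neg_one_le_average_sub_average {f g : ℕ → ℝ} (hf : ∀ t, 0 ≤ f t) (hg : ∀ t, g t ≤ 1)
    (T : ℕ) :
    -1 ≤ (1 / (T : ℝ)) * ∑ t ∈ range T, f t - (1 / (T : ℝ)) * ∑ t ∈ range T, g t := by
  have hf_avg : 0 ≤ (1 / (T : ℝ)) * ∑ t ∈ range T, f t :=
    mul_nonneg (by positivity) (sum_nonneg fun t _ => hf t)
  have hg_sum : ∑ t ∈ range T, g t ≤ T := by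
    simpa using sum_le_sum fun t (_ : t ∈ range T) => hg t
  have hg_avg : (1 / (T : ℝ)) * ∑ t ∈ range T, g t ≤ 1 := by
    rw [one_div_mul_eq_div]
    exact div_le_one_of_le₀ hg_sum (Nat.cast_nonneg T)
  linarith

section Buckets

variable {N : ℕ} {y p pF : ℕ → ℝ} {ι : ℕ → Fin N} {Ti : ℕ → Fin N → ℕ} {R : ℕ → Fin N → ℝ}

theorem sum_bucket_card (hTi : ∀ T i, Ti T i = #{t ∈ range T | ι t = i}) (T : ℕ) :
    ∑ i, (Ti T i : ℝ) = T := by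
  simp only [hTi]
  exact_mod_cast (card_eq_sum_card_fiberwise fun t _ => mem_univ (ι t)).symm.trans (card_range T)

theorem sum_sq_sub_eq_sum_bucket_card_mul
    (hTi : ∀ T i, Ti T i = #{t ∈ range T | ι t = i})
    (hR : ∀ T i, R T i = if 0 < Ti T i then (1 / (Ti T i : ℝ)) * ∑ t ∈ range T with ι t = i,
      ((y t - p t) ^ 2 - (y t - (i : ℝ) / N) ^ 2) else 0) (T : ℕ) :
    ∑ t ∈ range T, ((y t - p t) ^ 2 - (y t - (ι t : ℝ) / N) ^ 2) = ∑ i, (Ti T i : ℝ) * R T i :=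
  calc ∑ t ∈ range T, ((y t - p t) ^ 2 - (y t - (ι t : ℝ) / N) ^ 2)
      = ∑ i, ∑ t ∈ range T with ι t = i, ((y t - p t) ^ 2 - (y t - (ι t : ℝ) / N) ^ 2) :=
        (sum_fiberwise _ _ _).symm
    _ = ∑ i, ∑ t ∈ range T with ι t = i, ((y t - p t) ^ 2 - (y t - (i : ℝ) / N) ^ 2) :=
        sum_congr rfl fun i _ => sum_congr rfl fun t ht => by rw [(mem_filter.1 ht).2]
    _ = ∑ i, (Ti T i : ℝ) * R T i :=
        sum_congr rfl fun i _ => by rw [hR, hTi, card_mul_average_eq_sum]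

theorem sum_sq_sub_bucket_le (hy : ∀ t, y t ≤ 1)
    (hpF : ∀ t, pF t ∈ Set.Icc ((ι t : ℝ) / N) (((ι t : ℝ) + 1) / N)) (T : ℕ) :
    ∑ t ∈ range T, (y t - (ι t : ℝ) / N) ^ 2 ≤ ∑ t ∈ range T, (y t - pF t) ^ 2 + T * (2 / N) := by
  have hpoint : ∀ t, (y t - (ι t : ℝ) / N) ^ 2 ≤ (y t - pF t) ^ 2 + 2 / N := fun t => by
    refine (sq_sub_le_sq_sub_add_two_mul (hy t) (by positivity) (hpF t).1 ?_).trans_eq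
      (by ring : _ + 2 * (1 / (N : ℝ)) = _)
    exact (hpF t).2.trans_eq (add_div _ _ _)
  simpa [sum_add_distrib] using sum_le_sum fun t (_ : t ∈ range T) => hpoint t

theorem average_sq_sub_average_sq_le
    (hy : ∀ t, y t ≤ 1)
    (hpF : ∀ t, pF t ∈ Set.Icc ((ι t : ℝ) / N) (((ι t : ℝ) + 1) / N))
    (hTi : ∀ T i, Ti T i = #{t ∈ range T | ι t = i})
    (hR : ∀ T i, R T i = if 0 < Ti T i then (1 / (Ti T i : ℝ)) * ∑ t ∈ range T with ι t = i,
      ((y t - p t) ^ 2 - (y t - (i : ℝ) / N) ^ 2) else 0)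
    {T : ℕ} (hT : 0 < T) {ε : ℝ} (hRε : ∀ i, R T i ≤ ε) :
    (1 / (T : ℝ)) * ∑ t ∈ range T, (y t - p t) ^ 2 -
      (1 / (T : ℝ)) * ∑ t ∈ range T, (y t - pF t) ^ 2 ≤ 2 / N + ε := by
  have hregret : ∑ i, (Ti T i : ℝ) * R T i ≤ T * ε :=
    calc ∑ i, (Ti T i : ℝ) * R T i ≤ ∑ i, (Ti T i : ℝ) * ε :=
          sum_le_sum fun i _ => mul_le_mul_of_nonneg_left (hRε i) (Nat.cast_nonneg _)
      _ = T * ε := by rw [← sum_mul, sum_bucket_card hTi]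
  have hsplit := sum_sq_sub_eq_sum_bucket_card_mul hTi hR T
  have hconst := sum_sq_sub_bucket_le hy hpF T
  rw [sum_sub_distrib] at hsplit
  rw [← mul_sub, one_div, inv_mul_le_iff₀ (Nat.cast_pos.2 hT)]
  linarith

end Buckets

theorem recalibration_limsup_regret_general
    (N : ℕ)
    (y p pF : ℕ → ℝ) (ι : ℕ → Fin N)
    (hy : ∀ t, y t = 0 ∨ y t = 1)
    (hpF : ∀ t, pF t ∈ Set.Icc ((ι t : ℝ) / N) (((ι t : ℝ) + 1) / N))
    (Ti : ℕ → Fin N → ℕ)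
    (hTi : ∀ T i, Ti T i = ((range T).filter (fun t => ι t = i)).card)
    (R : ℕ → Fin N → ℝ)
    (hR : ∀ T i, R T i =
      if 0 < Ti T i then
        (1 / (Ti T i : ℝ)) * ∑ t ∈ (range T).filter (fun t => ι t = i),
          ((y t - p t) ^ 2 - (y t - (i : ℝ) / N) ^ 2)
      else 0)
    (hRlimsup : ∀ i, limsup (fun T => R T i) atTop ≤ 0)
    (hRbdd : ∃ B : ℝ, ∀ i T, R T i ≤ B) :
    limsup (fun T : ℕ =>
        (1 / (T : ℝ)) * ∑ t ∈ range T, (y t - p t) ^ 2 -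
          (1 / (T : ℝ)) * ∑ t ∈ range T, (y t - pF t) ^ 2) atTop ≤ 2 / N := by
  obtain ⟨B, hB⟩ := hRbdd
  have hy01 : ∀ t, y t ∈ Set.Icc (0 : ℝ) 1 := fun t => by rcases hy t with h | h <;> simp [h]
  -- `limsup` in `ℝ` only behaves for sequences bounded below; here the losses lie in `[0, 1]`.
  have hcobdd : IsCoboundedUnder (· ≤ ·) atTop (fun T : ℕ =>
      (1 / (T : ℝ)) * ∑ t ∈ range T, (y t - p t) ^ 2 -
        (1 / (T : ℝ)) * ∑ t ∈ range T, (y t - pF t) ^ 2) :=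
    isCoboundedUnder_le_of_le atTop fun T =>
      neg_one_le_average_sub_average (fun t => sq_nonneg _)
        (fun t => sq_sub_le_one (hy01 t) (Icc_div_subset_Icc_zero_one (ι t) (hpF t))) T
  refine le_of_forall_gt_imp_ge_of_dense fun c hc => limsup_le_of_le hcobdd ?_
  have hRsmall : ∀ᶠ T in atTop, ∀ i, R T i < c - 2 / N :=
    eventually_all.2 fun i => eventually_lt_of_limsup_lt ((hRlimsup i).trans_lt (by linarith))
      (isBoundedUnder_of ⟨B, hB i⟩)
  filter_upwards [hRsmall, eventually_gt_atTop 0] with T hRT hT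
  linarith [average_sq_sub_average_sq_le (fun t => (hy01 t).2) hpF hTi hR hT fun i => (hRT i).le]

/-- Asymptotic regret bound of the recalibration framework: if every bucket's
per-bucket regret (against the constant action `i/N`) is asymptotically nonpositive
and uniformly bounded above, then the recalibrated forecasts are asymptotically at
most `2/N` worse in average squared loss than the original forecasts. -/
theorem recalibration_limsup_regret
    (N : ℕ) (hN : 1 ≤ N)
    (y p pF : ℕ → ℝ) (ι : ℕ → Fin N)
    (hy : ∀ t, y t = 0 ∨ y t = 1)
    (hp : ∀ t, p t ∈ Set.Icc (0 : ℝ) 1)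
    (hpF : ∀ t, pF t ∈ Set.Icc ((ι t : ℝ) / N) (((ι t : ℝ) + 1) / N))
    (Ti : ℕ → Fin N → ℕ)
    (hTi : ∀ T i, Ti T i = ((range T).filter (fun t => ι t = i)).card)
    (R : ℕ → Fin N → ℝ)
    (hR : ∀ T i, R T i =
      if 0 < Ti T i then
        (1 / (Ti T i : ℝ)) * ∑ t ∈ (range T).filter (fun t => ι t = i),
          ((y t - p t) ^ 2 - (y t - (i : ℝ) / N) ^ 2)
      else 0)
    (hRlimsup : ∀ i, limsup (fun T => R T i) atTop ≤ 0)
    (hRbdd : ∃ B : ℝ, ∀ i T, R T i ≤ B) :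
    limsup (fun T : ℕ =>
        (1 / (T : ℝ)) * ∑ t ∈ range T, (y t - p t) ^ 2 -
          (1 / (T : ℝ)) * ∑ t ∈ range T, (y t - pF t) ^ 2) atTop ≤ 2 / N :=
  recalibration_limsup_regret_general N y p pF ι hy hpF Ti hTi R hR hRlimsup hRbdd
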